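/- arXiv:1903.09001 — 4 statements merged into one kernel-verified Lean document; each statement's English description precedes it below -/
import Mathlib

section
/- For every even integer n ≥ 2, the dark region has infinite area, i.e. D(n) = ∞ (the two-dimensional Lebesgue measure of the dark region is infinite). -/
open Real MeasureTheory

/-- A point of the Euclidean plane with the given coordinates. -/
noncomputable def pt (a b : ℝ) : EuclideanSpace ℝ (Fin 2) :=
  (EuclideanSpace.equiv (Fin 2) ℝ).symm ![a, b]

/-- The center of lighthouse `i` among `n` lighthouses placed on a circle of radius `n`
around the origin. -/
noncomputable def center (n i : ℕ) : EuclideanSpace ℝ (Fin 2) :=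
  pt (n * Real.cos (2 * Real.pi * i / n)) (n * Real.sin (2 * Real.pi * i / n))

/-- `q` is illuminated by lighthouse `i` (among `n` lighthouses): the angle at the vertex
`center n i` between the origin and `q` is at most `π / n`, and the open segment from
`center n i` to `q` does not meet the closed unit disk around any other lighthouse center. -/
noncomputable def Illuminated (n i : ℕ) (q : EuclideanSpace ℝ (Fin 2)) : Prop :=
  EuclideanGeometry.angle 0 (center n i) q ≤ Real.pi / n ∧
    ∀ j < n, j ≠ i → ∀ p ∈ openSegment ℝ (center n i) q, p ∉ Metric.closedBall (center n j) 1

/-- The dark region: points outside every closed unit disk that are illuminated by no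
lighthouse. -/
noncomputable def darkRegion (n : ℕ) : Set (EuclideanSpace ℝ (Fin 2)) :=
  {q | (∀ i < n, q ∉ Metric.closedBall (center n i) 1) ∧ ∀ i < n, ¬ Illuminated n i q}

/-- `D n` is the two-dimensional Lebesgue measure of the dark region. -/
noncomputable def D (n : ℕ) : ENNReal := volume (darkRegion n)

/-!
For even `n = 2k`, lighthouse `0` sits at `(n, 0)` and lighthouse `k` at `(-n, 0)`. Take the
half-strip `x ≤ -X`, `|y| ≤ 1`. The segment from `(n, 0)` to one of its points crosses the line
`x = -n` at height at most `1`, i.e. inside the disk of lighthouse `k`, so lighthouse `0` is blocked.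
Lighthouse `i ≠ 0` sits at polar angle `θ = 2πi/n`. For `X` large it sees the point in a
direction close to `(-1, 0)`, which makes the angle `min θ (2π - θ) ≥ 2π/n` with its direction to
the origin, beyond the half-aperture `π/n`; quantitatively, the cosine of the angle at the
lighthouse drops below `cos (π/n)` once `X (cos (π/n) - cos (2π/n)) > 2n + 1`. So for `X` large
the half-strip is dark, and it has infinite area.
-/

open InnerProductGeometry

lemma cos_le_cos_of_mem_Icc {a x : ℝ} (ha : 0 ≤ a) (hax : a ≤ x)
    (hxa : x ≤ 2 * π - a) : cos x ≤ cos a := by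
  rcases le_total x π with hxπ | hπx
  · exact cos_le_cos_of_nonneg_of_le_pi ha hxπ hax
  · rw [← cos_two_pi_sub x]
    exact cos_le_cos_of_nonneg_of_le_pi ha (by linarith) (by linarith)

lemma cos_two_pi_mul_div_le {n i : ℕ} (hi : 1 ≤ i) (hin : i < n) :
    cos (2 * π * i / n) ≤ cos (2 * π / n) := by
  have hn : (0 : ℝ) < n := Nat.cast_pos.2 (by omega)
  have hi' : (1 : ℝ) ≤ i := by exact_mod_cast hi
  have hin' : (i : ℝ) + 1 ≤ n := by exact_mod_cast hin
  apply cos_le_cos_of_mem_Icc (by positivity)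
  · rw [div_le_div_iff_of_pos_right hn]; nlinarith [pi_pos]
  · rw [div_le_iff₀ hn, sub_mul, div_mul_cancel₀ _ hn.ne']; nlinarith [pi_pos]

lemma cos_two_pi_div_lt_cos_pi_div {x : ℝ} (hx : 2 ≤ x) : cos (2 * π / x) < cos (π / x) := by
  have hx0 : 0 < x := by linarith
  apply cos_lt_cos_of_nonneg_of_le_pi (by positivity)
  · rw [div_le_iff₀ hx0]; nlinarith [pi_pos]
  · rw [mul_div_assoc]; linarith [div_pos pi_pos hx0]

lemma cos_pi_div_nonneg {x : ℝ} (hx : 2 ≤ x) : 0 ≤ cos (π / x) := by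
  apply cos_nonneg_of_mem_Icc ⟨by linarith [pi_pos, div_pos pi_pos (by linarith : (0:ℝ) < x)], ?_⟩
  rw [div_le_div_iff₀ (by linarith) two_pos]; nlinarith [pi_pos]

lemma cos_mul_norm_mul_norm_le_inner {V : Type*} [NormedAddCommGroup V] [InnerProductSpace ℝ V]
    {u v : V} {α : ℝ} (hα : α ≤ π) (h : angle u v ≤ α) :
    cos α * (‖u‖ * ‖v‖) ≤ inner ℝ u v := by
  rw [← cos_angle_mul_norm_mul_norm]
  gcongr
  exact cos_le_cos_of_nonneg_of_le_pi (angle_nonneg u v) hα h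

lemma volume_setOf_apply_zero_le_abs_apply_one_le (a : ℝ) {r : ℝ} (hr : 0 < r) :
    volume {q : EuclideanSpace ℝ (Fin 2) | q 0 ≤ a ∧ |q 1| ≤ r} = ⊤ := by
  have hpre : {q : EuclideanSpace ℝ (Fin 2) | q 0 ≤ a ∧ |q 1| ≤ r} =
      WithLp.ofLp ⁻¹' Set.univ.pi ![Set.Iic a, Set.Icc (-r) r] := by
    ext q; simp [Fin.forall_fin_two, abs_le]
  have hmeas : MeasurableSet (Set.univ.pi ![Set.Iic a, Set.Icc (-r) r]) :=
    MeasurableSet.univ_pi fun i => by fin_cases i <;> simp [measurableSet_Iic, measurableSet_Icc]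
  rw [hpre, (PiLp.volume_preserving_ofLp (Fin 2)).measure_preimage hmeas.nullMeasurableSet,
    volume_pi_pi, Fin.prod_univ_two]
  simp [hr]

lemma dist_eq_abs_sub_apply_one {u v : EuclideanSpace ℝ (Fin 2)} (h : u 0 = v 0) :
    dist u v = |u 1 - v 1| := by
  simp [EuclideanSpace.dist_eq, Fin.sum_univ_two, h, Real.dist_eq, sqrt_sq_eq_abs]

lemma exists_mem_openSegment_apply_zero_eq {a q : EuclideanSpace ℝ (Fin 2)} {b : ℝ}
    (ha : a 1 = 0) (hqb : q 0 < b) (hba : b < a 0) :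
    ∃ p ∈ openSegment ℝ a q, p 0 = b ∧ |p 1| ≤ |q 1| := by
  set t := (a 0 - b) / (a 0 - q 0)
  have hd : 0 < a 0 - q 0 := by linarith
  have ht0 : 0 < t := div_pos (by linarith) hd
  have ht1 : t < 1 := (div_lt_one hd).2 (by linarith)
  refine ⟨(1 - t) • a + t • q, ⟨1 - t, t, by linarith, ht0, by ring, rfl⟩, ?_, ?_⟩
  · simp only [PiLp.add_apply, PiLp.smul_apply, smul_eq_mul, t]
    field_simp
    ring
  · simp only [PiLp.add_apply, PiLp.smul_apply, smul_eq_mul, ha, mul_zero, zero_add, abs_mul,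
      abs_of_pos ht0]
    exact mul_le_of_le_one_left (abs_nonneg _) ht1.le

lemma center_apply_zero (n i : ℕ) : center n i 0 = n * cos (2 * π * i / n) := rfl

lemma center_apply_one (n i : ℕ) : center n i 1 = n * sin (2 * π * i / n) := rfl

lemma norm_center (n i : ℕ) : ‖center n i‖ = n := by
  rw [EuclideanSpace.norm_eq, Fin.sum_univ_two, center_apply_zero, center_apply_one]
  simp only [Real.norm_eq_abs, sq_abs, mul_pow, ← mul_add, cos_sq_add_sin_sq, mul_one]
  exact sqrt_sq n.cast_nonneg

lemma inner_center (n i : ℕ) (q : EuclideanSpace ℝ (Fin 2)) :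
    inner ℝ (center n i) q = n * (cos (2 * π * i / n) * q 0 + sin (2 * π * i / n) * q 1) := by
  simp only [PiLp.inner_apply, RCLike.inner_apply, conj_trivial, Fin.sum_univ_two,
    center_apply_zero, center_apply_one]
  ring

lemma notMem_closedBall_center {n : ℕ} (i : ℕ) {q : EuclideanSpace ℝ (Fin 2)}
    (hq : q 0 < -(n + 1)) : q ∉ Metric.closedBall (center n i) 1 := by
  rw [Metric.mem_closedBall, not_le]
  have hc : -(n : ℝ) ≤ center n i 0 := by
    rw [center_apply_zero]; nlinarith [neg_one_le_cos (2 * π * i / n), n.cast_nonneg (α := ℝ)]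
  calc (1 : ℝ) < |q 0 - center n i 0| := by rw [abs_sub_comm, lt_abs]; left; linarith
    _ ≤ dist q (center n i) := PiLp.dist_apply_le q (center n i) 0

lemma not_illuminated_zero {n k : ℕ} (hk : n = 2 * k) (hk0 : k ≠ 0)
    {q : EuclideanSpace ℝ (Fin 2)} (hq0 : q 0 < -n) (hq1 : |q 1| ≤ 1) : ¬ Illuminated n 0 q := by
  have hθ : 2 * π * k / n = π := by
    rw [hk]; push_cast; field_simp
  obtain ⟨p, hp, hp0, hp1⟩ := exists_mem_openSegment_apply_zero_eq (a := center n 0) (b := -n)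
    (by simp [center_apply_one]) hq0 (by simp [center_apply_zero]; omega)
  refine fun hI => hI.2 k (by omega) hk0 p hp ?_
  rw [Metric.mem_closedBall, dist_eq_abs_sub_apply_one (by simp [hp0, center_apply_zero, hθ])]
  simpa [center_apply_one, hθ] using hp1.trans hq1

lemma pi_div_lt_angle_center {n i : ℕ} (hn : 2 ≤ n) (hi : 1 ≤ i) (hin : i < n)
    {q : EuclideanSpace ℝ (Fin 2)} (hq1 : |q 1| ≤ 1)
    (hq0 : 2 * n + 1 < -q 0 * (cos (π / n) - cos (2 * π / n))) :
    π / n < EuclideanGeometry.angle 0 (center n i) q := by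
  have hn' : (2 : ℝ) ≤ n := by exact_mod_cast hn
  have hn0 : (0 : ℝ) < n := by linarith
  set C := cos (π / n)
  set c := cos (2 * π * i / n)
  set s := sin (2 * π * i / n)
  have hC0 : 0 ≤ C := cos_pi_div_nonneg hn'
  have hx : 0 < -q 0 := pos_of_mul_pos_left ((by positivity : (0 : ℝ) < 2 * n + 1).trans hq0)
    (sub_pos.2 (cos_two_pi_div_lt_cos_pi_div hn')).le
  have hCc : -q 0 * (C - cos (2 * π / n)) ≤ -q 0 * (C - c) :=
    mul_le_mul_of_nonneg_left (sub_le_sub_left (cos_two_pi_mul_div_le hi hin) C) hx.le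
  have hsy : -1 ≤ s * q 1 := by
    refine (abs_le.1 ?_).1
    rw [abs_mul]
    exact mul_le_one₀ (abs_sin_le_one _) (abs_nonneg _) hq1
  have hCc1 : -1 ≤ C * c := by
    refine (abs_le.1 ?_).1
    rw [abs_mul]
    exact mul_le_one₀ (abs_cos_le_one _) (abs_nonneg _) (abs_cos_le_one _)
  have hnorm : n * c - q 0 ≤ ‖q - center n i‖ := by
    have := PiLp.norm_apply_le (q - center n i) 0
    rw [PiLp.sub_apply, center_apply_zero, Real.norm_eq_abs, abs_sub_comm] at this
    exact (le_abs_self _).trans this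
  by_contra! h
  have key := cos_mul_norm_mul_norm_le_inner (u := 0 - center n i) (v := q - center n i)
    (div_le_self pi_pos.le (by linarith : (1 : ℝ) ≤ n)) h
  rw [zero_sub, norm_neg, norm_center, inner_neg_left, inner_sub_right,
    inner_center, real_inner_self_eq_norm_sq, norm_center] at key
  have hkey : C * (n * c - q 0) ≤ n - (c * q 0 + s * q 1) := by
    refine le_of_mul_le_mul_left ?_ hn0
    linarith [mul_le_mul_of_nonneg_left hnorm (mul_nonneg hC0 hn0.le)]
  linarith [mul_le_mul_of_nonneg_left hCc1 hn0.le]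

theorem dark_area_infinite_of_even (n : ℕ) (hn : 2 ≤ n) (heven : Even n) :
    D n = ⊤ := by
  obtain ⟨k, hk⟩ := heven.two_dvd
  have hn' : (2 : ℝ) ≤ n := by exact_mod_cast hn
  set δ := cos (π / n) - cos (2 * π / n)
  have hδ : 0 < δ := sub_pos.2 (cos_two_pi_div_lt_cos_pi_div hn')
  set X : ℝ := max (n + 2) ((2 * n + 2) / δ)
  refine measure_mono_top ?_ (volume_setOf_apply_zero_le_abs_apply_one_le (-X) one_pos)
  rintro q ⟨hq0, hq1⟩
  have hX : X ≤ -q 0 := le_neg_of_le_neg hq0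
  have hfar : n + 2 ≤ -q 0 := (le_max_left _ _).trans hX
  have hfar' : 2 * n + 2 ≤ -q 0 * δ := (div_le_iff₀ hδ).1 ((le_max_right _ _).trans hX)
  refine ⟨fun i _ => notMem_closedBall_center i (by linarith), fun i hi hI => ?_⟩
  rcases Nat.eq_zero_or_pos i with rfl | hi0
  · exact not_illuminated_zero hk (by omega) (by linarith) hq1 hI
  · exact (pi_div_lt_angle_center hn hi0 hi hq1 (by linarith)).not_ge hI.1
end

section
/- Let n ≥ 3 be an integer, and set y = n·sin(π/n) and z = √(4n²·cos²(π/(2n)) − 1). Then y > 1, and x_n = (z + 2n²·sin(π/n)·cos²(π/(2n))) / (y² − 1) is the unique positive real solution of the quadratic equation (y² − 1)·X² − 2z·X + (y² − z²) = 0. -/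
/-!
With `θ = π/(2n)`, `s = sin θ`, `c = cos θ` one has `y = 2nsc`, `z² = 4n²c² - 1` and the numerator
of `x_n` is `z + w` with `w = 4n²sc³`. The identity `s² + c² = 1` turns the discriminant
`z² - (y² - 1)(y² - z²)` into `w²`, so the roots are `(z ± w)/(y² - 1)`. Since `y² - z² = 1 - 4n²c⁴`
is negative (as `c² ≥ 3/4` for `n ≥ 3`), the two roots have opposite signs, and `x_n` is the
positive one. Jordan's inequality `sin θ ≥ 2θ/π` gives `ns ≥ 1`, hence `y ≥ 2c > 1`.
-/

open Real

theorem quadratic_unique_pos_root {a b c w : ℝ} (ha : 0 < a) (hc : c < 0) (hw : 0 ≤ w)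
    (hdisc : w ^ 2 = b ^ 2 - a * c) :
    0 < (b + w) / a ∧ a * ((b + w) / a) ^ 2 - 2 * b * ((b + w) / a) + c = 0 ∧
      ∀ X : ℝ, 0 < X → a * X ^ 2 - 2 * b * X + c = 0 → X = (b + w) / a := by
  have hbw : |b| < w := abs_lt_of_sq_lt_sq (by nlinarith) hw
  have factor : ∀ X : ℝ, a * (a * X ^ 2 - 2 * b * X + c) = (a * X - (b + w)) * (a * X - (b - w)) :=
    fun X => by linear_combination hdisc
  refine ⟨div_pos (by linarith [neg_abs_le b]) ha, ?_, fun X hX hroot => ?_⟩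
  · have h := factor ((b + w) / a)
    rw [mul_div_cancel₀ _ ha.ne', sub_self, zero_mul] at h
    exact (mul_eq_zero.mp h).resolve_left ha.ne'
  · have h := factor X
    rw [hroot, mul_zero, eq_comm, mul_eq_zero] at h
    rcases h with h | h
    · rw [eq_div_iff ha.ne']; linarith
    · nlinarith [le_abs_self b, mul_pos ha hX]

theorem one_le_mul_sin_pi_div_two_mul {N : ℝ} (hN : 1 ≤ N) : 1 ≤ N * sin (π / (2 * N)) := by
  have hN0 : 0 < N := by linarith
  have hθ : π / (2 * N) ≤ π / 2 := div_le_div_of_nonneg_left pi_pos.le two_pos (by linarith)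
  calc 1 = N * (2 / π * (π / (2 * N))) := by field_simp
    _ ≤ N * sin (π / (2 * N)) := mul_le_mul_of_nonneg_left (mul_le_sin (by positivity) hθ) hN0.le

theorem three_div_four_le_cos_pi_div_two_mul_sq {N : ℝ} (hN : 3 ≤ N) :
    3 / 4 ≤ cos (π / (2 * N)) ^ 2 := by
  have hθ : π / (2 * N) ≤ π / 6 := div_le_div_of_nonneg_left pi_pos.le (by norm_num) (by linarith)
  have hcos : √3 / 2 ≤ cos (π / (2 * N)) := by
    rw [← cos_pi_div_six]
    exact cos_le_cos_of_nonneg_of_le_pi (by positivity) (by linarith [pi_pos]) hθ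
  calc (3 : ℝ) / 4 = (√3 / 2) ^ 2 := by rw [div_pow, sq_sqrt (by norm_num)]; norm_num
    _ ≤ cos (π / (2 * N)) ^ 2 := by gcongr

/-- For `n ≥ 3`, with `y = n·sin(π/n)` and `z = √(4n²·cos²(π/(2n)) − 1)`, one has `y > 1`
and `x_n = (z + 2n²·sin(π/n)·cos²(π/(2n)))/(y² − 1)` is the unique positive real solution of
`(y² − 1)·X² − 2z·X + (y² − z²) = 0`. -/
theorem xn_unique_positive_root (n : ℕ) (hn : 3 ≤ n) :
    let y : ℝ := n * Real.sin (Real.pi / n)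
    let z : ℝ := Real.sqrt (4 * (n : ℝ) ^ 2 * Real.cos (Real.pi / (2 * n)) ^ 2 - 1)
    let x : ℝ := (z + 2 * (n : ℝ) ^ 2 * Real.sin (Real.pi / n) *
      Real.cos (Real.pi / (2 * n)) ^ 2) / (y ^ 2 - 1)
    1 < y ∧ 0 < x ∧ (y ^ 2 - 1) * x ^ 2 - 2 * z * x + (y ^ 2 - z ^ 2) = 0 ∧
      ∀ X : ℝ, 0 < X → (y ^ 2 - 1) * X ^ 2 - 2 * z * X + (y ^ 2 - z ^ 2) = 0 → X = x := by
  intro y z x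
  have hN : (3 : ℝ) ≤ n := by exact_mod_cast hn
  have hNs := one_le_mul_sin_pi_div_two_mul (by linarith : (1 : ℝ) ≤ n)
  have hc2 := three_div_four_le_cos_pi_div_two_mul_sq hN
  set s := sin (π / (2 * n))
  set c := cos (π / (2 * n))
  have hsc : s ^ 2 + c ^ 2 = 1 := sin_sq_add_cos_sq _
  have hsin : sin (π / n) = 2 * s * c := by
    rw [← sin_two_mul]; congr 1; field_simp
  have hy : y = 2 * n * s * c := by simp only [y, hsin]; ring
  have hz : z ^ 2 = 4 * n ^ 2 * c ^ 2 - 1 := sq_sqrt (by nlinarith)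
  have hx : x = (z + 4 * n ^ 2 * s * c ^ 3) / (y ^ 2 - 1) := by simp only [x, hsin]; ring
  have hc : 0 < c := cos_pos_of_mem_Ioo
    ⟨by linarith [pi_pos, div_pos pi_pos (by linarith : (0 : ℝ) < 2 * n)],
      div_lt_div_of_pos_left pi_pos two_pos (by linarith)⟩
  have hs : 0 < s := pos_of_mul_pos_right (by linarith : (0 : ℝ) < n * s) (by linarith)
  have hy1 : 1 < y := by rw [hy]; nlinarith
  have hyz : y ^ 2 - z ^ 2 < 0 := by rw [hy, hz]; nlinarith
  rw [hx]
  exact ⟨hy1, quadratic_unique_pos_root (by nlinarith) hyz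
    (mul_pos (mul_pos (by positivity) hs) (pow_pos hc 3)).le
    (by rw [hy, hz]; linear_combination (16 * (n : ℝ) ^ 4 * s ^ 2 * c ^ 4) * hsc)⟩
end

section
/- For every real x > 0, the two-dimensional Lebesgue measure of the set of points that lie in the triangle with vertices (0,0), (1,0), (1,x) (its convex hull) but outside the closed unit disk centered at the origin equals (x − arctan(x))/2. -/
/-!
In coordinates the triangle is `{0 ≤ y ≤ x a, a ≤ 1}`, and the hypotenuse `y = x a` leaves the unit
disk at the abscissa `c = (1 + x²)^(-1/2) = cos (arctan x)`. The part of the triangle outside the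
disk is therefore the region between `√(1 - a²)` and `x a` over `c < a ≤ 1`, whose area is
`∫_c^1 (x a - √(1 - a²)) da`. With the antiderivative `(a √(1 - a²) + arcsin a) / 2` of
`√(1 - a²)` and `arcsin c = π/2 - arctan x`, this equals `(x - arctan x) / 2`.
-/

open MeasureTheory

open Set Real

section regionBetween

variable {α : Type*} [MeasurableSpace α] {μ : Measure α} {f g : α → ℝ} {s : Set α}

theorem measure_prod_graph_eq_zero (hg : Measurable g) :
    μ.prod volume {p : α × ℝ | p.2 = g p.1} = 0 := by
  rw [Measure.prod_apply (measurableSet_graph hg)]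
  simp [preimage]

theorem measure_region_between_oc_eq (hg : Measurable g) :
    μ.prod volume {p : α × ℝ | p.1 ∈ s ∧ p.2 ∈ Ioc (f p.1) (g p.1)} =
      μ.prod volume (regionBetween f g s) := by
  refine measure_congr (ae_eq_set.2 ⟨measure_mono_null ?_ (measure_prod_graph_eq_zero hg), ?_⟩)
  · rintro p ⟨⟨hs, hf, hg⟩, hnot⟩
    exact le_antisymm hg (not_lt.1 fun h => hnot ⟨hs, hf, h⟩)
  · have hsub : regionBetween f g s ⊆ {p : α × ℝ | p.1 ∈ s ∧ p.2 ∈ Ioc (f p.1) (g p.1)} :=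
      fun p hp => ⟨hp.1, hp.2.1, hp.2.2.le⟩
    rw [sdiff_eq_empty.2 hsub, measure_empty]

end regionBetween

theorem hasDerivAt_mul_sqrt_one_sub_sq_add_arcsin {t : ℝ} (ht : t ∈ Ioo (-1) 1) :
    HasDerivAt (fun t => (t * √(1 - t ^ 2) + arcsin t) / 2) √(1 - t ^ 2) t := by
  have hpos : 0 < 1 - t ^ 2 := by nlinarith [ht.1, ht.2]
  have hsqrt : HasDerivAt (fun t => √(1 - t ^ 2)) (-t / √(1 - t ^ 2)) t := by
    convert ((hasDerivAt_pow 2 t).const_sub 1).sqrt hpos.ne' using 1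
    ring
  refine ((((hasDerivAt_id' t).mul hsqrt).add
    (hasDerivAt_arcsin ht.1.ne' ht.2.ne)).div_const 2).congr_deriv ?_
  have hne : √(1 - t ^ 2) ≠ 0 := (sqrt_pos.2 hpos).ne'
  field_simp
  rw [sq_sqrt hpos.le]
  ring

theorem integral_sqrt_one_sub_sq_of_le {a b : ℝ} (ha : -1 ≤ a) (hab : a ≤ b) (hb : b ≤ 1) :
    ∫ t in a..b, √(1 - t ^ 2) =
      ((b * √(1 - b ^ 2) + arcsin b) - (a * √(1 - a ^ 2) + arcsin a)) / 2 := by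
  rw [intervalIntegral.integral_eq_sub_of_hasDerivAt_of_le hab (by fun_prop)
    (fun t ht => hasDerivAt_mul_sqrt_one_sub_sq_add_arcsin ⟨ha.trans_lt ht.1, ht.2.trans_le hb⟩)
    (Continuous.intervalIntegrable (by fun_prop) _ _)]
  ring

theorem convexHull_right_triangle {x : ℝ} (hx : 0 < x) :
    convexHull ℝ {((0 : ℝ), (0 : ℝ)), (1, 0), (1, x)} =
      {p : ℝ × ℝ | 0 ≤ p.2 ∧ p.2 ≤ x * p.1 ∧ p.1 ≤ 1} := by
  refine Subset.antisymm (convexHull_min ?_ ?_) ?_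
  · rintro p (rfl | rfl | rfl) <;> simp [hx.le]
  · rintro u ⟨hu₀, hu₁, hu₂⟩ v ⟨hv₀, hv₁, hv₂⟩ a b ha hb hab
    simp only [mem_ofPred_eq, Prod.fst_add, Prod.snd_add, Prod.smul_fst, Prod.smul_snd,
      smul_eq_mul]
    refine ⟨?_, ?_, ?_⟩ <;> nlinarith
  · rintro ⟨a, y⟩ ⟨hy, hyx, ha⟩
    set V : Set (ℝ × ℝ) := {(0, 0), (1, 0), (1, x)}
    have hconv := convex_convexHull ℝ V
    have vertex_mem (q) (hq : q ∈ V) : q ∈ convexHull ℝ V := subset_convexHull ℝ V hq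
    have ha₀ : 0 ≤ a := nonneg_of_mul_nonneg_right (hy.trans hyx) hx
    -- `(a, y) = a • (1, y / a)`, also when `a = 0` (then `y = 0`)
    have hya : y / a * a = y := div_mul_cancel_of_imp fun h => by subst h; linarith
    have hedge : ((1 : ℝ), y / a) ∈ convexHull ℝ V := by
      have hyax : y / a / x ≤ 1 := div_le_one_of_le₀ (div_le_of_le_mul₀ ha₀ hx.le hyx) hx.le
      convert hconv (vertex_mem (1, 0) (by simp [V])) (vertex_mem (1, x) (by simp [V]))
        (sub_nonneg.2 hyax) (by positivity) (sub_add_cancel 1 (y / a / x)) using 1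
      ext
      · simp
      · simp [hx.ne']
    convert hconv.smul_mem_of_zero_mem (vertex_mem (0, 0) (by simp [V])) hedge ⟨ha₀, ha⟩ using 1
    ext
    · simp
    · simpa [mul_comm] using hya.symm

theorem right_triangle_diff_unitDisk_eq {x c : ℝ} (hx : 0 < x) (hc₀ : 0 ≤ c)
    (hc : c ^ 2 * (1 + x ^ 2) = 1) :
    {p : ℝ × ℝ | 0 ≤ p.2 ∧ p.2 ≤ x * p.1 ∧ p.1 ≤ 1} \ {p | p.1 ^ 2 + p.2 ^ 2 ≤ 1} =
      {p | p.1 ∈ Ioc c 1 ∧ p.2 ∈ Ioc √(1 - p.1 ^ 2) (x * p.1)} := by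
  ext ⟨a, y⟩
  simp only [mem_sdiff, mem_ofPred_eq, mem_Ioc, not_le]
  constructor
  · rintro ⟨⟨hy, hyx, ha⟩, hout⟩
    have ha₀ : 0 ≤ a := nonneg_of_mul_nonneg_right (hy.trans hyx) hx
    have hy₀ : 0 < y := by nlinarith
    refine ⟨⟨?_, ha⟩, (sqrt_lt' hy₀).2 (by linarith), hyx⟩
    by_contra! hac
    nlinarith [mul_le_mul hac hac ha₀ hc₀, mul_le_mul hyx hyx hy (by positivity)]
  · rintro ⟨⟨-, ha⟩, hsy, hyx⟩
    have hy : 0 ≤ y := (sqrt_nonneg _).trans hsy.le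
    exact ⟨⟨hy, hyx, ha⟩, by linarith [lt_sq_of_sqrt_lt hsy]⟩

theorem inv_sqrt_one_add_sq_sq_mul (x : ℝ) : (√(1 + x ^ 2))⁻¹ ^ 2 * (1 + x ^ 2) = 1 := by
  rw [inv_pow, sq_sqrt (by positivity), inv_mul_cancel₀ (by positivity)]

theorem inv_sqrt_one_add_sq_le_one (x : ℝ) : (√(1 + x ^ 2))⁻¹ ≤ 1 :=
  inv_le_one_of_one_le₀ (one_le_sqrt.2 (le_add_of_nonneg_right (sq_nonneg x)))

theorem integral_mul_sub_sqrt_one_sub_sq {x : ℝ} (hx : 0 < x) :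
    ∫ t in (√(1 + x ^ 2))⁻¹..1, (x * t - √(1 - t ^ 2)) = (x - arctan x) / 2 := by
  set c := (√(1 + x ^ 2))⁻¹
  have hsqrt : √(1 - c ^ 2) = x * c := by
    rw [← sqrt_sq (by positivity : 0 ≤ x * c)]
    congr 1
    linear_combination -inv_sqrt_one_add_sq_sq_mul x
  have harcsin : arcsin c = π / 2 - arctan x := by
    rw [arcsin_eq_pi_div_two_sub_arccos, arctan_eq_arccos hx.le]
  rw [intervalIntegral.integral_sub (Continuous.intervalIntegrable (by fun_prop) _ _)
      (Continuous.intervalIntegrable (by fun_prop) _ _),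
    intervalIntegral.integral_const_mul, integral_id,
    integral_sqrt_one_sub_sq_of_le (neg_one_lt_zero.le.trans (by positivity))
      (inv_sqrt_one_add_sq_le_one x) le_rfl, hsqrt, harcsin]
  simp only [one_pow, sub_self, sqrt_zero, mul_zero, arcsin_one, zero_add]
  ring

theorem volume_convexHull_right_triangle_diff_unitDisk {x : ℝ} (hx : 0 < x) :
    volume (convexHull ℝ {((0 : ℝ), (0 : ℝ)), (1, 0), (1, x)} \
        {p : ℝ × ℝ | p.1 ^ 2 + p.2 ^ 2 ≤ 1}) = ENNReal.ofReal ((x - arctan x) / 2) := by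
  set c := (√(1 + x ^ 2))⁻¹
  have hc₀ : 0 ≤ c := by positivity
  have hle (t) (ht : t ∈ Ioc c 1) : √(1 - t ^ 2) ≤ x * t := by
    have hct := mul_le_mul ht.1.le ht.1.le hc₀ (hc₀.trans ht.1.le)
    exact sqrt_le_iff.2 ⟨by nlinarith [ht.1], by nlinarith [inv_sqrt_one_add_sq_sq_mul x]⟩
  rw [convexHull_right_triangle hx,
    right_triangle_diff_unitDisk_eq hx hc₀ (inv_sqrt_one_add_sq_sq_mul x), Measure.volume_eq_prod,
    measure_region_between_oc_eq (f := fun t => √(1 - t ^ 2))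
      (by fun_prop : Measurable fun t => x * t),
    volume_regionBetween_eq_integral (Continuous.integrableOn_Ioc (by fun_prop))
      (Continuous.integrableOn_Ioc (by fun_prop)) measurableSet_Ioc hle,
    ← intervalIntegral.integral_of_le (inv_sqrt_one_add_sq_le_one x)]
  exact congrArg ENNReal.ofReal (integral_mul_sub_sqrt_one_sub_sq hx)

noncomputable def planeEquiv : EuclideanSpace ℝ (Fin 2) ≃L[ℝ] ℝ × ℝ :=
  (EuclideanSpace.equiv (Fin 2) ℝ).trans (ContinuousLinearEquiv.finTwoArrow ℝ ℝ)

theorem measurePreserving_planeEquiv : MeasurePreserving planeEquiv :=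
  (volume_preserving_finTwoArrow ℝ).comp (PiLp.volume_preserving_ofLp (Fin 2))

theorem planeEquiv_symm_apply (a b : ℝ) : planeEquiv.symm (a, b) = pt a b := rfl

theorem preimage_planeEquiv_unitDisk :
    planeEquiv ⁻¹' {p | p.1 ^ 2 + p.2 ^ 2 ≤ 1} = Metric.closedBall 0 1 := by
  ext p
  simp [EuclideanSpace.norm_eq, Fin.sum_univ_two, planeEquiv]

theorem preimage_planeEquiv_convexHull (s : Set (ℝ × ℝ)) :
    planeEquiv ⁻¹' convexHull ℝ s = convexHull ℝ (planeEquiv.symm '' s) := by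
  rw [← planeEquiv.image_symm_eq_preimage]
  exact planeEquiv.symm.toLinearMap.image_convexHull s

/-- The area of the part of the triangle with vertices `(0,0)`, `(1,0)`, `(1,x)` lying
outside the closed unit disk centered at the origin is `(x − arctan x)/2`. -/
theorem triangle_sub_disk_area (x : ℝ) (hx : 0 < x) :
    volume (convexHull ℝ {pt 0 0, pt 1 0, pt 1 x} \
        Metric.closedBall (0 : EuclideanSpace ℝ (Fin 2)) 1) =
      ENNReal.ofReal ((x - Real.arctan x) / 2) := by
  have hvertices : {pt 0 0, pt 1 0, pt 1 x} =
      planeEquiv.symm '' {((0 : ℝ), (0 : ℝ)), (1, 0), (1, x)} := by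
    simp only [image_insert_eq, image_singleton, planeEquiv_symm_apply]
  rw [hvertices, ← preimage_planeEquiv_convexHull, ← preimage_planeEquiv_unitDisk,
    ← preimage_sdiff,
    measurePreserving_planeEquiv.measure_preimage_emb planeEquiv.toHomeomorph.measurableEmbedding]
  exact volume_convexHull_right_triangle_diff_unitDisk hx
end

section
/- With x = (√1664 + √8748)/46, the quantity 3·(x − arctan(x)) lies strictly between 5.03 and 5.04 (so D(3) ≈ 5.0376). -/
/-! Since `x ≈ 2.92`, the Maclaurin series of `arctan` is useless at `x` itself, but
`arctan x = π/2 - arctan y` with `y = 1/x = (√8748 - √1664)/154 ≈ 0.3425`. There the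
alternating series truncated after its second and third terms brackets `arctan y` to
within `y⁵/5 < 10⁻³`, and each truncation bound follows from the sign of its derivative,
`s⁴/(1+s²)` resp. `s⁶/(1+s²)`. -/

open Real

namespace Real

theorem sub_pow_three_div_le_arctan {x : ℝ} (hx : 0 ≤ x) : x - x ^ 3 / 3 ≤ arctan x := by
  have mono : Monotone fun s => arctan s - (s - s ^ 3 / 3) :=
    monotone_of_hasDerivAt_nonneg (f' := fun s => s ^ 4 / (1 + s ^ 2))
      (fun s => ((hasDerivAt_arctan s).sub ((hasDerivAt_id s).sub
        ((hasDerivAt_pow 3 s).div_const 3))).congr_deriv (by field_simp; ring))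
      (fun s => by positivity)
  simpa using mono hx

theorem arctan_le_sub_pow_three_div_add_pow_five_div {x : ℝ} (hx : 0 ≤ x) :
    arctan x ≤ x - x ^ 3 / 3 + x ^ 5 / 5 := by
  have mono : Monotone fun s => s - s ^ 3 / 3 + s ^ 5 / 5 - arctan s :=
    monotone_of_hasDerivAt_nonneg (f' := fun s => s ^ 6 / (1 + s ^ 2))
      (fun s => ((((hasDerivAt_id s).sub ((hasDerivAt_pow 3 s).div_const 3)).add
        ((hasDerivAt_pow 5 s).div_const 5)).sub (hasDerivAt_arctan s)).congr_deriv
          (by field_simp; ring))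
      (fun s => by positivity)
  simpa using mono hx

end Real

-- Rationalize the denominator: `8748 - 1664 = 46 · 154`.
theorem inv_sqrt_1664_add_sqrt_8748_div :
    ((√1664 + √8748) / 46)⁻¹ = (√8748 - √1664) / 154 := by
  have h1 : √1664 ^ 2 = 1664 := sq_sqrt (by norm_num)
  have h2 : √8748 ^ 2 = 8748 := sq_sqrt (by norm_num)
  have hpos : 0 < √1664 + √8748 := by positivity
  rw [inv_div, div_eq_div_iff hpos.ne' (by norm_num)]
  nlinarith

/-- With `x = (√1664 + √8748)/46`, the total dark area `D(3) = 3·(x − arctan x)` lies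
strictly between `5.03` and `5.04`. -/
theorem D3_bounds :
    let x : ℝ := (Real.sqrt 1664 + Real.sqrt 8748) / 46
    5.03 < 3 * (x - Real.arctan x) ∧ 3 * (x - Real.arctan x) < 5.04 := by
  intro x
  have s1l : (40.7921 : ℝ) < √1664 := by rw [lt_sqrt (by norm_num)]; norm_num
  have s1u : √1664 < 40.7922 := by rw [sqrt_lt' (by norm_num)]; norm_num
  have s2l : (93.5307 : ℝ) < √8748 := by rw [lt_sqrt (by norm_num)]; norm_num
  have s2u : √8748 < 93.5308 := by rw [sqrt_lt' (by norm_num)]; norm_num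
  have hxl : (134.3228 : ℝ) / 46 < x := by simp only [x]; linarith
  have hxu : x < (134.3230 : ℝ) / 46 := by simp only [x]; linarith
  have hx : 0 < x := by positivity
  have harctan : arctan x = π / 2 - arctan x⁻¹ := by rw [arctan_inv_of_pos hx]; ring
  have hy : x⁻¹ = (√8748 - √1664) / 154 := inv_sqrt_1664_add_sqrt_8748_div
  set y := x⁻¹
  have hyl : (0.34245 : ℝ) < y := by rw [hy]; linarith
  have hyu : y < 0.34246 := by rw [hy]; linarith
  have hy0 : 0 ≤ y := by positivity
  have hy3l := pow_lt_pow_left₀ hyl (by norm_num) three_ne_zero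
  have hy3u := pow_lt_pow_left₀ hyu hy0 three_ne_zero
  have hy5u := pow_lt_pow_left₀ hyu hy0 (by norm_num : 5 ≠ 0)
  have harctan_lower := sub_pow_three_div_le_arctan hy0
  have harctan_upper := arctan_le_sub_pow_three_div_add_pow_five_div hy0
  have hpi_lower := pi_gt_d4
  have hpi_upper := pi_lt_d4
  rw [harctan]
  constructor <;> linarith
end
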